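/- With hypotheses as in the orthogonal decomposition setting (O an order in B = F, a CM field, or a totally definite quaternion algebra over a totally real field F; f a totally positive Hermitian form on V = B^n), every O-lattice L ⊆ V admits an orthogonal decomposition L = L_1 ⊥ ⋯ ⊥ L_r into indecomposable O-sublattices, and the multiset {L_1, …, L_r} is uniquely determined by L. -/

import Mathlib

/-!
Eichler's argument. Call a nonzero vector of `L` indecomposable if it is not the sum of two
nonzero orthogonal vectors of `L`. The norm `x ↦ Tr_{F/ℚ} (f x x)`, read through an `F`-linear
retraction `B → F`, is positive, additive on orthogonal pairs and, `L` being finitely generated,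
takes values in `(1/d)ℤ` on `L`; descending along it, `L` is spanned by indecomposable vectors.
Link two indecomposable vectors when they are not orthogonal. The spans of the linkage classes
are pairwise orthogonal, indecomposable and sum to `L`. In any orthogonal decomposition of `L`,
an indecomposable vector lies in a single summand, and so does its whole class; hence each
summand is the sum of the classes it contains, and an indecomposable summand is a single class.
-/

open Submodule Relation

def LinearMap.ofBiadditive {M N P : Type*} [AddCommGroup M] [AddCommGroup N] [AddCommGroup P]
    (f : M → N → P) (hadd_left : ∀ x₁ x₂ y, f (x₁ + x₂) y = f x₁ y + f x₂ y)
    (hadd_right : ∀ x y₁ y₂, f x (y₁ + y₂) = f x y₁ + f x y₂) : M →ₗ[ℤ] N →ₗ[ℤ] P :=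
  LinearMap.mk₂ ℤ f hadd_left
    (fun m x y => map_zsmul (AddMonoidHom.mk' (f · y) (hadd_left · · y)) m x) hadd_right
    (fun m x y => map_zsmul (AddMonoidHom.mk' (f x) (hadd_right x)) m y)

theorem Finset.sup_sup_erase {α : Type*} [SemilatticeSup α] [OrderBot α] [DecidableEq α]
    {s : Finset α} {a : α} (ha : a ∈ s) : a ⊔ (s.erase a).sup id = s.sup id := by
  conv_rhs => rw [← insert_erase ha, sup_insert]
  rfl

theorem Submodule.FG.exists_finset_subset_span_eq {R M : Type*} [Semiring R] [AddCommMonoid M]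
    [Module R M] {L : Submodule R M} {s : Set M} (hL : L.FG) (hLs : L ≤ span R s)
    (hsL : s ⊆ L) : ∃ T : Finset M, ↑T ⊆ s ∧ span R (T : Set M) = L := by
  classical
  obtain ⟨G, rfl⟩ := hL
  choose T hTs hT using fun g : G => mem_span_finite_of_mem_span (hLs (subset_span g.2))
  have hTs' : ↑(Finset.univ.biUnion T) ⊆ s := by simpa using hTs
  refine ⟨Finset.univ.biUnion T, hTs', le_antisymm (span_le.2 (hTs'.trans hsL)) ?_⟩
  refine span_le.2 fun g hg => span_mono ?_ (hT ⟨g, hg⟩)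
  exact Finset.coe_subset.2 (Finset.subset_biUnion_of_mem T (Finset.mem_univ _))

theorem Submodule.FG.exists_pos_le_of_pos {Λ : Submodule ℤ ℚ} (hΛ : Λ.FG) :
    ∃ ε > 0, ∀ q ∈ Λ, 0 < q → ε ≤ q := by
  obtain ⟨a, ha, hint⟩ := FractionalIdeal.isFractional_of_fg (S := nonZeroDivisors ℤ) hΛ
  have ha0 : (a : ℚ) ≠ 0 := by exact_mod_cast nonZeroDivisors.ne_zero ha
  refine ⟨1 / |(a : ℚ)|, by positivity, fun q hq hq0 => ?_⟩
  obtain ⟨m, hm⟩ := hint q hq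
  have hm : (m : ℚ) = a * q := by simpa using hm
  have hm0 : m ≠ 0 := by rintro rfl; simp_all
  have : (1 : ℚ) ≤ |(a : ℚ)| * q := by
    rw [← abs_of_pos hq0, ← abs_mul, ← hm]
    exact_mod_cast Int.one_le_abs hm0
  rwa [div_le_iff₀' (by positivity)]

namespace Eichler

variable {V R A : Type*} [AddCommGroup V] [AddCommGroup R] [DistribSMul A V]
  (β : V →ₗ[ℤ] V →ₗ[ℤ] R)

def Orthogonal (M N : Submodule ℤ V) : Prop := ∀ x ∈ M, ∀ y ∈ N, β x y = 0

def IsStable (O : Set A) (M : Submodule ℤ V) : Prop := ∀ a ∈ O, ∀ x ∈ M, a • x ∈ M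

def IsOrthogonallyIndecomposable (O : Set A) (M : Submodule ℤ V) : Prop :=
  ∀ M₁ M₂ : Submodule ℤ V, IsStable O M₁ → IsStable O M₂ → M₁ ⊔ M₂ = M →
    Orthogonal β M₁ M₂ → M₁ = ⊥ ∨ M₂ = ⊥

def IsOrthogonalDecomposition (O : Set A) (L : Submodule ℤ V)
    (S : Finset (Submodule ℤ V)) : Prop :=
  (∀ M ∈ S, M ≠ ⊥ ∧ M ≤ L ∧ IsStable O M ∧ IsOrthogonallyIndecomposable β O M) ∧
    (S : Set (Submodule ℤ V)).Pairwise (Orthogonal β) ∧ S.sup id = L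

structure IsIndecomposableVector (L : Submodule ℤ V) (y : V) : Prop where
  mem : y ∈ L
  ne_zero : y ≠ 0
  eq_zero_or_eq_zero : ∀ u ∈ L, ∀ v ∈ L, u + v = y → β u v = 0 → u = 0 ∨ v = 0

def Linked (L : Submodule ℤ V) (u v : V) : Prop :=
  IsIndecomposableVector β L u ∧ IsIndecomposableVector β L v ∧ β u v ≠ 0

def component (L : Submodule ℤ V) (t : V) : Submodule ℤ V :=
  span ℤ {y | IsIndecomposableVector β L y ∧ ReflTransGen (Linked β L) t y}

variable {β} {O : Set A} {L M N K : Submodule ℤ V}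

section Orthogonal

theorem orthogonal_iff_le_orthogonalBilin : Orthogonal β M N ↔ N ≤ M.orthogonalBilin β :=
  ⟨fun h _ hy _ hx => h _ hx _ hy, fun h _ hx _ hy => h hy _ hx⟩

theorem orthogonal_iff_le_orthogonalBilin_flip :
    Orthogonal β M N ↔ M ≤ N.orthogonalBilin β.flip := Iff.rfl

theorem Orthogonal.symm (hβ : β.IsRefl) (h : Orthogonal β M N) : Orthogonal β N M :=
  fun y hy x hx => hβ _ _ (h x hx y hy)

theorem orthogonal_span {s t : Set V} (h : ∀ x ∈ s, ∀ y ∈ t, β x y = 0) :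
    Orthogonal β (span ℤ s) (span ℤ t) :=
  orthogonal_iff_le_orthogonalBilin.2 <| span_le.2 fun y hy =>
    (span_le (p := LinearMap.ker (β.flip y))).2 fun x hx => h x hx y hy

theorem orthogonal_finset_sup_right {T : Finset (Submodule ℤ V)}
    (h : ∀ N ∈ T, Orthogonal β M N) : Orthogonal β M (T.sup id) :=
  orthogonal_iff_le_orthogonalBilin.2 <| Finset.sup_le fun N hN =>
    orthogonal_iff_le_orthogonalBilin.1 (h N hN)

theorem orthogonal_finset_sup {S T : Finset (Submodule ℤ V)}
    (h : ∀ M ∈ S, ∀ N ∈ T, Orthogonal β M N) : Orthogonal β (S.sup id) (T.sup id) :=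
  orthogonal_iff_le_orthogonalBilin_flip.2 <| Finset.sup_le fun M hM =>
    orthogonal_iff_le_orthogonalBilin_flip.1 (orthogonal_finset_sup_right (h M hM))

theorem orthogonal_sup_erase {S : Finset (Submodule ℤ V)}
    (hS : (S : Set (Submodule ℤ V)).Pairwise (Orthogonal β)) (hK : K ∈ S) :
    Orthogonal β K ((S.erase K).sup id) :=
  orthogonal_finset_sup_right fun _ hN =>
    hS hK (Finset.mem_of_mem_erase hN) (Finset.ne_of_mem_erase hN).symm

theorem eq_bot_of_orthogonal_self (hβ₀ : ∀ x, β x x = 0 → x = 0) (h : Orthogonal β M M) :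
    M = ⊥ :=
  eq_bot_iff.2 fun x hx => (mem_bot ℤ).2 (hβ₀ x (h x hx x hx))

theorem mem_of_mem_sup_of_orthogonal (hβ₀ : ∀ x, β x x = 0 → x = 0) (hMN : Orthogonal β M N)
    {x : V} (hx : x ∈ M ⊔ N) (hxN : ∀ y ∈ N, β x y = 0) : x ∈ M := by
  obtain ⟨m, hm, n, hn, rfl⟩ := mem_sup.1 hx
  have : β n n = 0 := by simpa [hMN m hm n hn] using hxN n hn
  simpa [hβ₀ n this] using hm

end Orthogonal

section Stable

theorem IsStable.finset_sup {S : Finset (Submodule ℤ V)} (hS : ∀ M ∈ S, IsStable O M) :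
    IsStable O (S.sup id) :=
  Finset.sup_induction (p := IsStable O)
    (fun a _ x hx => by rw [mem_bot] at hx ⊢; rw [hx, smul_zero])
    (fun M₁ h₁ M₂ h₂ a ha x hx => by
      obtain ⟨y, hy, z, hz, rfl⟩ := mem_sup.1 hx
      rw [smul_add]
      exact add_mem (mem_sup_left (h₁ a ha y hy)) (mem_sup_right (h₂ a ha z hz))) hS

theorem IsStable.of_sup_eq (hβ₀ : ∀ x, β x x = 0 → x = 0)
    (hO : ∀ a ∈ O, ∀ x y, β x y = 0 → β (a • x) y = 0) (hL : IsStable O L)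
    (hsup : M ⊔ N = L) (hMN : Orthogonal β M N) : IsStable O M := fun a ha x hx =>
  mem_of_mem_sup_of_orthogonal hβ₀ hMN (hsup ▸ hL a ha x (hsup ▸ mem_sup_left hx))
    fun y hy => hO a ha x y (hMN x hx y hy)

end Stable

section Components

theorem IsIndecomposableVector.mem_or_mem {y : V} (hy : IsIndecomposableVector β L y)
    (hM : M ≤ L) (hN : N ≤ L) (hMN : Orthogonal β M N) (hyMN : y ∈ M ⊔ N) : y ∈ M ∨ y ∈ N := by
  obtain ⟨u, hu, v, hv, rfl⟩ := mem_sup.1 hyMN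
  rcases hy.eq_zero_or_eq_zero u (hM hu) v (hN hv) rfl (hMN u hu v hv) with rfl | rfl
  · exact Or.inr (by simpa using hv)
  · exact Or.inl (by simpa using hu)

theorem reflTransGen_linked_symm (hβ : β.IsRefl) {t y : V}
    (h : ReflTransGen (Linked β L) t y) : ReflTransGen (Linked β L) y t :=
  reflTransGen_swap.1 <|
    ReflTransGen.mono (fun _ _ ⟨hu, hv, huv⟩ => ⟨hv, hu, fun h => huv (hβ _ _ h)⟩) _ _ h

theorem component_le (t : V) : component β L t ≤ L :=
  span_le.2 fun _ hy => hy.1.mem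

theorem mem_component {t : V} (ht : IsIndecomposableVector β L t) : t ∈ component β L t :=
  subset_span ⟨ht, .refl⟩

theorem component_ne_bot {t : V} (ht : IsIndecomposableVector β L t) : component β L t ≠ ⊥ :=
  fun h => ht.ne_zero <| (mem_bot ℤ).1 (h ▸ mem_component ht)

theorem component_eq_of_reflTransGen (hβ : β.IsRefl) {t t' : V}
    (h : ReflTransGen (Linked β L) t t') : component β L t = component β L t' := by
  unfold component
  congr 1
  ext y
  exact and_congr_right fun _ => ⟨(reflTransGen_linked_symm hβ h).trans, h.trans⟩

theorem orthogonal_component (hβ : β.IsRefl) {t t' : V}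
    (h : ¬ ReflTransGen (Linked β L) t t') : Orthogonal β (component β L t) (component β L t') :=
  orthogonal_span fun _ ⟨hy, hty⟩ _ ⟨hy', hty'⟩ => by_contra fun hne =>
    h <| (hty.tail ⟨hy, hy', hne⟩).trans (reflTransGen_linked_symm hβ hty')

theorem component_le_of_mem {t : V} (hM : M ≤ L) (hN : N ≤ L) (hMN : Orthogonal β M N)
    (hle : component β L t ≤ M ⊔ N) (ht : t ∈ M) : component β L t ≤ M := by
  suffices ∀ y, ReflTransGen (Linked β L) t y → y ∈ M from span_le.2 fun y hy => this y hy.2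
  intro y hty
  induction hty with
  | refl => exact ht
  | @tail b c htb hbc hb =>
    have hc : c ∈ component β L t := subset_span ⟨hbc.2.1, htb.tail hbc⟩
    exact (hbc.2.1.mem_or_mem hM hN hMN (hle hc)).resolve_right fun hcN =>
      hbc.2.2 (hMN b hb c hcN)

theorem component_le_or_le (hβ : β.IsRefl) {t : V} (ht : IsIndecomposableVector β L t)
    (hM : M ≤ L) (hN : N ≤ L) (hMN : Orthogonal β M N) (hle : component β L t ≤ M ⊔ N) :
    component β L t ≤ M ∨ component β L t ≤ N :=
  (ht.mem_or_mem hM hN hMN (hle (mem_component ht))).imp (component_le_of_mem hM hN hMN hle)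
    (component_le_of_mem hN hM (hMN.symm hβ) (sup_comm M N ▸ hle))

theorem isOrthogonallyIndecomposable_component (hβ : β.IsRefl) (hβ₀ : ∀ x, β x x = 0 → x = 0)
    {t : V} (ht : IsIndecomposableVector β L t) :
    IsOrthogonallyIndecomposable β O (component β L t) := by
  intro M₁ M₂ _ _ hsup hM₁₂
  have hM₁ : M₁ ≤ L := le_sup_left.trans (hsup.le.trans (component_le t))
  have hM₂ : M₂ ≤ L := le_sup_right.trans (hsup.le.trans (component_le t))
  rcases component_le_or_le hβ ht hM₁ hM₂ hM₁₂ hsup.ge with h | h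
  · exact Or.inr <| eq_bot_of_orthogonal_self hβ₀ fun x hx y hy =>
      hM₁₂ x (h (hsup ▸ mem_sup_right hx)) y hy
  · exact Or.inl <| eq_bot_of_orthogonal_self hβ₀ fun x hx y hy =>
      hM₁₂ x hx y (h (hsup ▸ mem_sup_left hy))

end Components

section Existence

theorem le_span_isIndecomposableVector (q : V → ℚ) {ε : ℚ} (hε : 0 < ε)
    (hqε : ∀ x ∈ L, x ≠ 0 → ε ≤ q x) (hq : ∀ u v, β u v = 0 → q (u + v) = q u + q v) :
    L ≤ span ℤ {y | IsIndecomposableVector β L y} := by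
  intro x hx
  obtain ⟨k, hk⟩ := Archimedean.arch (q x) hε
  induction k generalizing x with
  | zero =>
    by_contra hxW
    have := hqε x hx fun h => hxW (h ▸ zero_mem _)
    simp only [zero_smul] at hk
    linarith
  | succ k ih =>
    by_cases hxW : IsIndecomposableVector β L x
    · exact subset_span hxW
    by_cases hx0 : x = 0
    · exact hx0 ▸ zero_mem _
    obtain ⟨u, hu, v, hv, rfl, huv, hu0, hv0⟩ :
        ∃ u ∈ L, ∃ v ∈ L, u + v = x ∧ β u v = 0 ∧ u ≠ 0 ∧ v ≠ 0 := by
      by_contra! h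
      exact hxW ⟨hx, hx0, fun u hu v hv huv h0 => or_iff_not_imp_left.2 (h u hu v hv huv h0)⟩
    rw [succ_nsmul, hq u v huv] at hk
    exact add_mem (ih hu (by linarith [hqε v hv hv0])) (ih hv (by linarith [hqε u hu hu0]))

theorem exists_pos_le_of_fg (μ : R →+ ℚ) (hL : L.FG) :
    ∃ ε > 0, ∀ x ∈ L, 0 < μ (β x x) → ε ≤ μ (β x x) := by
  obtain ⟨G, rfl⟩ := hL
  have hΛ : (map₂ (β.compr₂ μ.toIntLinearMap) (span ℤ G) (span ℤ G)).FG := by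
    rw [map₂_span_span]
    exact fg_span (G.finite_toSet.image2 _ G.finite_toSet)
  obtain ⟨ε, hε, h⟩ := hΛ.exists_pos_le_of_pos
  exact ⟨ε, hε, fun x hx => h _ (apply_mem_map₂ _ hx hx)⟩

theorem isOrthogonalDecomposition_image_component (hβ : β.IsRefl)
    (hβ₀ : ∀ x, β x x = 0 → x = 0) (hO : ∀ a ∈ O, ∀ x y, β x y = 0 → β (a • x) y = 0)
    (hLO : IsStable O L) {T : Finset V} (hT : ∀ t ∈ T, IsIndecomposableVector β L t)
    (hTL : span ℤ (T : Set V) = L) :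
    IsOrthogonalDecomposition β O L (T.image (component β L)) := by
  have hsup : (T.image (component β L)).sup id = L :=
    le_antisymm (Finset.sup_le (by simp [component_le])) <| hTL.ge.trans <| span_le.2 fun t ht =>
      Finset.le_sup (f := id) (Finset.mem_image_of_mem (component β L) ht) (mem_component (hT t ht))
  have horth : (T.image (component β L) : Set (Submodule ℤ V)).Pairwise (Orthogonal β) := by
    simp only [Finset.coe_image]
    rintro _ ⟨t, -, rfl⟩ _ ⟨t', -, rfl⟩ hne
    exact orthogonal_component hβ fun h => hne (component_eq_of_reflTransGen hβ h)
  refine ⟨?_, horth, hsup⟩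
  simp only [Finset.mem_image]
  rintro _ ⟨t, ht, rfl⟩
  have hmem := Finset.mem_image_of_mem (component β L) ht
  exact ⟨component_ne_bot (hT t ht), component_le t,
    IsStable.of_sup_eq hβ₀ hO hLO ((Finset.sup_sup_erase hmem).trans hsup)
      (orthogonal_sup_erase horth hmem), isOrthogonallyIndecomposable_component hβ hβ₀ (hT t ht)⟩

end Existence

section Uniqueness

theorem IsOrthogonallyIndecomposable.mem_of_finset_sup_eq
    (hM : IsOrthogonallyIndecomposable β O M) (hM₀ : M ≠ ⊥) {S : Finset (Submodule ℤ V)}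
    (hS : (S : Set (Submodule ℤ V)).Pairwise (Orthogonal β)) (hS₀ : ∀ K ∈ S, K ≠ ⊥)
    (hSO : ∀ K ∈ S, IsStable O K) (hSM : S.sup id = M) : M ∈ S := by
  obtain ⟨K, hK⟩ : S.Nonempty := Finset.nonempty_iff_ne_empty.2 fun h => hM₀ (by simp [← hSM, h])
  have hsup : K ⊔ (S.erase K).sup id = M := (Finset.sup_sup_erase hK).trans hSM
  rcases hM K _ (hSO K hK) (IsStable.finset_sup fun N hN => hSO N (Finset.mem_of_mem_erase hN))
    hsup (orthogonal_sup_erase hS hK) with h | h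
  · exact absurd h (hS₀ K hK)
  · rwa [← hsup, h, sup_bot_eq]

open Classical in
theorem eq_finset_sup_filter_le (hβ₀ : ∀ x, β x x = 0 → x = 0) {S : Finset (Submodule ℤ V)}
    (hS : (S : Set (Submodule ℤ V)).Pairwise (Orthogonal β)) (hMN : Orthogonal β M N)
    (hSMN : S.sup id = M ⊔ N) (hle : ∀ K ∈ S, K ≤ M ∨ K ≤ N) :
    M = (S.filter (· ≤ M)).sup id := by
  refine le_antisymm (fun x hx => ?_) (Finset.sup_le fun K hK => (Finset.mem_filter.1 hK).2)
  have hPN : (S.filter (¬ · ≤ M)).sup id ≤ N := Finset.sup_le fun K hK => by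
    rw [Finset.mem_filter] at hK
    exact (hle K hK.1).resolve_left hK.2
  have hPP' : Orthogonal β ((S.filter (· ≤ M)).sup id) ((S.filter (¬ · ≤ M)).sup id) :=
    orthogonal_finset_sup fun K hK K' hK' => by
      rw [Finset.mem_filter] at hK hK'
      exact hS hK.1 hK'.1 fun h => hK'.2 (h ▸ hK.2)
  refine mem_of_mem_sup_of_orthogonal hβ₀ hPP' ?_ fun y hy => hMN x hx y (hPN hy)
  rw [← Finset.sup_union, Finset.filter_union_filter_not_eq, hSMN]
  exact mem_sup_left hx

theorem eq_of_subset_of_finset_sup_le (hβ₀ : ∀ x, β x x = 0 → x = 0)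
    {S T : Finset (Submodule ℤ V)} (hT : (T : Set (Submodule ℤ V)).Pairwise (Orthogonal β))
    (hT₀ : ∀ K ∈ T, K ≠ ⊥) (hST : S ⊆ T) (hle : T.sup id ≤ S.sup id) : S = T := by
  refine Finset.Subset.antisymm hST fun K hK => by_contra fun hKS => hT₀ K hK ?_
  have : Orthogonal β K (S.sup id) := orthogonal_finset_sup_right fun N hN =>
    hT hK (hST hN) fun h => hKS (h ▸ hN)
  exact eq_bot_of_orthogonal_self hβ₀ fun x hx y hy =>
    this x hx y (hle (Finset.le_sup (f := id) hK hy))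

theorem mem_image_component_of_isOrthogonalDecomposition (hβ : β.IsRefl)
    (hβ₀ : ∀ x, β x x = 0 → x = 0) (hO : ∀ a ∈ O, ∀ x y, β x y = 0 → β (a • x) y = 0)
    (hLO : IsStable O L) {T : Finset V} (hT : ∀ t ∈ T, IsIndecomposableVector β L t)
    (hTL : span ℤ (T : Set V) = L) {S : Finset (Submodule ℤ V)}
    (hS : IsOrthogonalDecomposition β O L S) (hM : M ∈ S) : M ∈ T.image (component β L) := by
  classical
  obtain ⟨hS₀mem, hS₀orth, hS₀sup⟩ :=
    isOrthogonalDecomposition_image_component hβ hβ₀ hO hLO hT hTL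
  obtain ⟨hSmem, hSorth, hSsup⟩ := hS
  have hMN := orthogonal_sup_erase hSorth hM
  have hML : M ⊔ (S.erase M).sup id = L := (Finset.sup_sup_erase hM).trans hSsup
  have hle : ∀ K ∈ T.image (component β L), K ≤ M ∨ K ≤ (S.erase M).sup id := by
    simp only [Finset.mem_image]
    rintro _ ⟨t, ht, rfl⟩
    exact component_le_or_le hβ (hT t ht) (hML ▸ le_sup_left) (hML ▸ le_sup_right) hMN
      (hML ▸ component_le t)
  have hMeq := eq_finset_sup_filter_le hβ₀ hS₀orth hMN (hS₀sup.trans hML.symm) hle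
  refine Finset.mem_of_mem_filter M <| (hSmem M hM).2.2.2.mem_of_finset_sup_eq (hSmem M hM).1
    (hS₀orth.mono (Finset.filter_subset _ _))
    (fun K hK => (hS₀mem K (Finset.mem_of_mem_filter K hK)).1)
    (fun K hK => (hS₀mem K (Finset.mem_of_mem_filter K hK)).2.2.1) hMeq.symm

theorem eq_image_component_of_isOrthogonalDecomposition (hβ : β.IsRefl)
    (hβ₀ : ∀ x, β x x = 0 → x = 0) (hO : ∀ a ∈ O, ∀ x y, β x y = 0 → β (a • x) y = 0)
    (hLO : IsStable O L) {T : Finset V} (hT : ∀ t ∈ T, IsIndecomposableVector β L t)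
    (hTL : span ℤ (T : Set V) = L) {S : Finset (Submodule ℤ V)}
    (hS : IsOrthogonalDecomposition β O L S) : S = T.image (component β L) :=
  have hdec := isOrthogonalDecomposition_image_component hβ hβ₀ hO hLO hT hTL
  eq_of_subset_of_finset_sup_le hβ₀ hdec.2.1 (fun K hK => (hdec.1 K hK).1)
    (fun _ hM => mem_image_component_of_isOrthogonalDecomposition hβ hβ₀ hO hLO hT hTL hS hM)
    (hdec.2.2.trans hS.2.2.symm).le

end Uniqueness

theorem existsUnique_isOrthogonalDecomposition (hβ : β.IsRefl) (μ : R →+ ℚ)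
    (hμ : ∀ x ≠ 0, 0 < μ (β x x)) (hO : ∀ a ∈ O, ∀ x y, β x y = 0 → β (a • x) y = 0)
    (hL : L.FG) (hLO : IsStable O L) : ∃! S, IsOrthogonalDecomposition β O L S := by
  have hβ₀ (x : V) (h : β x x = 0) : x = 0 := by_contra fun hx => (hμ x hx).ne' (by simp [h])
  obtain ⟨ε, hε, hεle⟩ := exists_pos_le_of_fg (β := β) μ hL
  have hspan := le_span_isIndecomposableVector (β := β) (fun x => μ (β x x)) hε
    (fun x hx hx0 => hεle x hx (hμ x hx0)) fun u v huv => by simp [huv, hβ u v huv]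
  obtain ⟨T, hT, hTL⟩ := hL.exists_finset_subset_span_eq hspan fun _ hy => hy.mem
  exact ⟨_, isOrthogonalDecomposition_image_component hβ hβ₀ hO hLO hT hTL,
    fun _ hS => eq_image_component_of_isOrthogonalDecomposition hβ hβ₀ hO hLO hT hTL hS⟩

end Eichler

theorem NumberField.trace_pos_of_forall_pos {F : Type*} [Field F] [NumberField F]
    (hF : ∀ φ : F →+* ℂ, ∀ x : F, (φ x).im = 0) {c : F} (hc : ∀ σ : F →+* ℝ, 0 < σ c) :
    0 < Algebra.trace ℚ F c := by
  have hreal (σ : F →ₐ[ℚ] ℂ) : ComplexEmbedding.IsReal σ.toRingHom :=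
    ComplexEmbedding.isReal_iff.2 <| RingHom.ext fun x => Complex.conj_eq_iff_im.2 (hF _ x)
  have : Nonempty (F →ₐ[ℚ] ℂ) := Fintype.card_pos_iff.1 <| by
    rw [AlgHom.card]
    exact Module.finrank_pos
  have hpos : (0 : ℝ) < (algebraMap ℚ ℂ (Algebra.trace ℚ F c)).re := by
    rw [trace_eq_sum_embeddings ℂ, Complex.re_sum]
    exact Finset.sum_pos (fun σ _ => hc (hreal σ).embedding) Finset.univ_nonempty
  simpa using hpos

theorem exists_addMonoidHom_algebraMap_eq_trace (F B : Type*) [Field F] [CharZero F] [Ring B]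
    [Nontrivial B] [Algebra F B] :
    ∃ μ : B →+ ℚ, ∀ c : F, μ (algebraMap F B c) = Algebra.trace ℚ F c := by
  obtain ⟨g, hg⟩ := (Algebra.linearMap F B).exists_leftInverse_of_injective
    (LinearMap.ker_eq_bot.2 (algebraMap F B).injective)
  exact ⟨(Algebra.trace ℚ F).toAddMonoidHom.comp g.toAddMonoidHom, fun c => by
    simp [← Algebra.linearMap_apply, ← LinearMap.comp_apply, hg]⟩

theorem unique_orthogonal_decomposition_general
    (F : Type*) [Field F] [NumberField F]
    (htotreal : ∀ φ : F →+* ℂ, ∀ x : F, (φ x).im = 0)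
    (B : Type*) [Ring B] [StarRing B] [Algebra F B]
    (O : Subring B)
    (n : ℕ) (f : (Fin n → B) → (Fin n → B) → B)
    (hf_add : ∀ x₁ x₂ y : Fin n → B, f (x₁ + x₂) y = f x₁ y + f x₂ y)
    (hf_smul : ∀ (a : B) (x y : Fin n → B), f (a • x) y = a * f x y)
    (hf_conj : ∀ x y : Fin n → B, f y x = star (f x y))
    (hf_pos : ∀ x : Fin n → B, x ≠ 0 → ∃ c : F,
      f x x = algebraMap F B c ∧ ∀ σ : F →+* ℝ, 0 < σ c)
    (L : Submodule ℤ (Fin n → B)) (hLfg : L.FG)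
    (hLO : ∀ a ∈ O, ∀ x ∈ L, a • x ∈ L) :
    ∃! S : Finset (Submodule ℤ (Fin n → B)),
      (∀ M ∈ S, M ≠ ⊥ ∧ M ≤ L ∧ (∀ a ∈ O, ∀ x ∈ M, a • x ∈ M) ∧
        -- `M` is indecomposable
        (∀ M₁ M₂ : Submodule ℤ (Fin n → B),
          (∀ a ∈ O, ∀ x ∈ M₁, a • x ∈ M₁) → (∀ a ∈ O, ∀ x ∈ M₂, a • x ∈ M₂) →
          M₁ ⊔ M₂ = M → (∀ x ∈ M₁, ∀ y ∈ M₂, f x y = 0) → M₁ = ⊥ ∨ M₂ = ⊥)) ∧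
      -- the summands are pairwise orthogonal
      (∀ M ∈ S, ∀ N ∈ S, M ≠ N → ∀ x ∈ M, ∀ y ∈ N, f x y = 0) ∧
      -- and their (orthogonal) sum is `L`
      S.sup id = L := by
  have hf_add_right (x y₁ y₂ : Fin n → B) : f x (y₁ + y₂) = f x y₁ + f x y₂ := by
    rw [hf_conj (y₁ + y₂), hf_conj y₁, hf_conj y₂, hf_add, star_add]
  let β := LinearMap.ofBiadditive f hf_add hf_add_right
  have hβ : β.IsRefl := fun x y (h : f x y = 0) => show f y x = 0 by rw [hf_conj, h, star_zero]
  obtain ⟨μ, hμ⟩ : ∃ μ : B →+ ℚ, ∀ x, x ≠ 0 → 0 < μ (β x x) := by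
    rcases subsingleton_or_nontrivial B with hB | hB
    · exact ⟨0, fun x hx => absurd (Subsingleton.elim x 0) hx⟩
    obtain ⟨μ, hμ⟩ := exists_addMonoidHom_algebraMap_eq_trace F B
    refine ⟨μ, fun x hx => ?_⟩
    obtain ⟨c, hc, hcpos⟩ := hf_pos x hx
    rw [show β x x = algebraMap F B c from hc, hμ]
    exact NumberField.trace_pos_of_forall_pos htotreal hcpos
  exact Eichler.existsUnique_isOrthogonalDecomposition hβ μ hμ (O := (O : Set B))
    (fun a _ x y (h : f x y = 0) => show f (a • x) y = 0 by rw [hf_smul, h, mul_zero]) hLfg hLO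

/-- In the setting of the paper (`O` an order in `B = F`, a CM field, or a totally definite
quaternion algebra over a totally real field `F`; `f` a totally positive Hermitian form on
`V = Bⁿ`), every `O`-lattice `L ⊆ V` admits an orthogonal decomposition
`L = L₁ ⊥ ⋯ ⊥ L_r` into indecomposable `O`-sublattices, and the set `{L₁, …, L_r}` is
uniquely determined by `L`. -/
theorem unique_orthogonal_decomposition
    (F : Type*) [Field F] [NumberField F]
    (htotreal : ∀ φ : F →+* ℂ, ∀ x : F, (φ x).im = 0)
    (B : Type*) [Ring B] [StarRing B] [Algebra F B]
    (hstarF : ∀ a : F, star (algebraMap F B a) = algebraMap F B a)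
    (hcase :
      Nonempty (B ≃ₐ[F] F) ∨
      ((∀ x y : B, x * y = y * x) ∧ IsField B ∧ Module.finrank F B = 2 ∧
        ∀ φ : B →+* ℂ, ∃ x : B, (φ x).im ≠ 0) ∨
      (∃ a b : F, Nonempty (B ≃ₐ[F] QuaternionAlgebra F a 0 b) ∧
        ∀ σ : F →+* ℝ, σ a < 0 ∧ σ b < 0))
    (O : Subring B)
    (hOfg : ∃ s : Finset B, (s : Set B) ⊆ (O : Set B) ∧
      ∀ b ∈ O, b ∈ Submodule.span ℤ (s : Set B))
    (hOfull : ∀ b : B, ∃ m : ℤ, m ≠ 0 ∧ (m : B) * b ∈ O)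
    (n : ℕ) (f : (Fin n → B) → (Fin n → B) → B)
    (hf_add : ∀ x₁ x₂ y : Fin n → B, f (x₁ + x₂) y = f x₁ y + f x₂ y)
    (hf_smul : ∀ (a : B) (x y : Fin n → B), f (a • x) y = a * f x y)
    (hf_conj : ∀ x y : Fin n → B, f y x = star (f x y))
    (hf_pos : ∀ x : Fin n → B, x ≠ 0 → ∃ c : F,
      f x x = algebraMap F B c ∧ ∀ σ : F →+* ℝ, 0 < σ c)
    (L : Submodule ℤ (Fin n → B)) (hL : L ≠ ⊥) (hLfg : L.FG)
    (hLfull : ∀ v : Fin n → B, ∃ m : ℤ, m ≠ 0 ∧ m • v ∈ L)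
    (hLO : ∀ a ∈ O, ∀ x ∈ L, a • x ∈ L) :
    ∃! S : Finset (Submodule ℤ (Fin n → B)),
      (∀ M ∈ S, M ≠ ⊥ ∧ M ≤ L ∧ (∀ a ∈ O, ∀ x ∈ M, a • x ∈ M) ∧
        -- `M` is indecomposable
        (∀ M₁ M₂ : Submodule ℤ (Fin n → B),
          (∀ a ∈ O, ∀ x ∈ M₁, a • x ∈ M₁) → (∀ a ∈ O, ∀ x ∈ M₂, a • x ∈ M₂) →
          M₁ ⊔ M₂ = M → (∀ x ∈ M₁, ∀ y ∈ M₂, f x y = 0) → M₁ = ⊥ ∨ M₂ = ⊥)) ∧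
      -- the summands are pairwise orthogonal
      (∀ M ∈ S, ∀ N ∈ S, M ≠ N → ∀ x ∈ M, ∀ y ∈ N, f x y = 0) ∧
      -- and their (orthogonal) sum is `L`
      S.sup id = L :=
  unique_orthogonal_decomposition_general F htotreal B O n f hf_add hf_smul hf_conj hf_pos L hLfg
    hLO
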